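/- Let μ ≥ 1 and define a_μ : [0,1] → ℝ by a_μ(x) = μ sin(5πx) for x ∈ [0, 0.2) ∪ (0.8, 1] and a_μ(x) = sin(5πx) for x ∈ [0.2, 0.8]. Then −2 ∫₀¹ a_μ(x) sin³(πx) dx = −( √((5 − √5)/2) · (5 − √5)² · (μ − 1) ) / (128π). In particular this quantity is negative for every μ > 1. -/

import Mathlib

open Set

/-- The piecewise weight `a_μ(x) = μ sin(5πx)` for `x ∈ [0,0.2) ∪ (0.8,1]` and
`a_μ(x) = sin(5πx)` for `x ∈ [0.2,0.8]`. -/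
noncomputable def aMu (μ x : ℝ) : ℝ :=
  open scoped Classical in
  if x ∈ Set.Ico (0:ℝ) 0.2 ∪ Set.Ioc (0.8:ℝ) 1 then μ * Real.sin (5 * Real.pi * x)
  else Real.sin (5 * Real.pi * x)

/-!
Writing `sin³ t = (3 sin t - sin 3t)/4` and expanding products of sines into cosines, the
integrand `sin(5πx) sin³(πx)` has the explicit antiderivative `G(πx)/π` with `G` a combination of
`sin 2t, sin 4t, sin 6t, sin 8t`. Since only even frequencies occur, `G(π - t) = -G(t)`; hence
`G(0) = G(π) = 0` and `G(4π/5) = -G(π/5)`, so the integral over `[0,1]` of `a_μ(x) sin³(πx)` is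
`2(μ - 1) G(π/5)/π`, and `G(π/5)` is evaluated from `cos(π/5) = (1 + √5)/4`.
-/

open Real intervalIntegral

theorem Real.sin_five_mul_mul_sin_pow_three (t : ℝ) :
    sin (5 * t) * sin t ^ 3
      = (3 * cos (4 * t) - 3 * cos (6 * t) - cos (2 * t) + cos (8 * t)) / 8 := by
  have h₁ : 2 * sin (5 * t) * sin t = cos (4 * t) - cos (6 * t) := by
    rw [two_mul_sin_mul_sin]; ring_nf
  have h₃ : 2 * sin (5 * t) * sin (3 * t) = cos (2 * t) - cos (8 * t) := by
    rw [two_mul_sin_mul_sin]; ring_nf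
  linear_combination sin (5 * t) / 4 * sin_three_mul t + 3 / 8 * h₁ - 1 / 8 * h₃

noncomputable def sinFiveMulSinCubeAntideriv (t : ℝ) : ℝ :=
  (3 * sin (4 * t) / 4 - sin (6 * t) / 2 - sin (2 * t) / 2 + sin (8 * t) / 8) / 8

local notation "G" => sinFiveMulSinCubeAntideriv

theorem hasDerivAt_sinFiveMulSinCubeAntideriv (t : ℝ) :
    HasDerivAt G (sin (5 * t) * sin t ^ 3) t := by
  have hk (k : ℝ) : HasDerivAt (fun t => sin (k * t)) (cos (k * t) * k) t := by
    simpa using ((hasDerivAt_id t).const_mul k).sin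
  rw [sin_five_mul_mul_sin_pow_three]
  exact (((((hk 4).const_mul 3).div_const 4).sub ((hk 6).div_const 2)).sub
    ((hk 2).div_const 2) |>.add ((hk 8).div_const 8)).div_const 8 |>.congr_deriv (by ring)

theorem sinFiveMulSinCubeAntideriv_pi_sub (t : ℝ) : G (π - t) = -G t := by
  have sin_even (n : ℕ) : sin (2 * n * (π - t)) = -sin (2 * n * t) := by
    rw [← sin_nat_mul_two_pi_sub]; ring_nf
  have h₁ := sin_even 1; have h₂ := sin_even 2; have h₃ := sin_even 3; have h₄ := sin_even 4
  norm_num at h₁ h₂ h₃ h₄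
  simp only [sinFiveMulSinCubeAntideriv, h₁, h₂, h₃, h₄]
  ring

theorem sinFiveMulSinCubeAntideriv_zero : G 0 = 0 := by
  simp [sinFiveMulSinCubeAntideriv]

theorem sinFiveMulSinCubeAntideriv_pi_div_five :
    G (π / 5) = 5 * sin (π / 5) * (3 - √5) / 128 := by
  have h₄ : sin (4 * (π / 5)) = sin (π / 5) := by
    rw [← sin_pi_sub]; ring_nf
  have h₆ : sin (6 * (π / 5)) = -sin (π / 5) := by
    rw [← sin_add_pi]; ring_nf
  have h₂ : sin (2 * (π / 5)) = 2 * sin (π / 5) * cos (π / 5) := sin_two_mul _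
  have h₈ : sin (8 * (π / 5)) = -sin (2 * (π / 5)) := by
    rw [← sin_two_pi_sub]; ring_nf
  simp only [sinFiveMulSinCubeAntideriv, h₄, h₆, h₈, h₂, cos_pi_div_five]
  ring

theorem integral_sin_five_mul_mul_sin_pow_three (a b : ℝ) :
    ∫ x in a..b, sin (5 * π * x) * sin (π * x) ^ 3 = (G (π * b) - G (π * a)) / π := by
  have hderiv (x : ℝ) :
      HasDerivAt (fun x => G (π * x) / π) (sin (5 * π * x) * sin (π * x) ^ 3) x := by
    refine ((hasDerivAt_sinFiveMulSinCubeAntideriv (π * x)).comp x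
      ((hasDerivAt_id x).const_mul π)).div_const π |>.congr_deriv ?_
    field_simp [pi_ne_zero]
  rw [integral_eq_sub_of_hasDerivAt (fun x _ => hderiv x)
    (Continuous.intervalIntegrable (by fun_prop) a b)]
  ring

theorem aMu_of_mem_outer {μ x : ℝ} (hx : x ∈ Ico 0 0.2 ∪ Ioc 0.8 1) :
    aMu μ x = μ * sin (5 * π * x) := by
  simp only [aMu, if_pos hx]

theorem aMu_of_mem_Icc {μ x : ℝ} (hx : x ∈ Icc 0.2 0.8) : aMu μ x = sin (5 * π * x) := by
  have hx' : x ∉ Ico 0 0.2 ∪ Ioc 0.8 1 := by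
    rintro (⟨-, h⟩ | ⟨h, -⟩) <;> linarith [hx.1, hx.2]
  simp only [aMu, if_neg hx']

theorem integral_aMu_mul_sin_pow_three (μ : ℝ) :
    ∫ x in (0:ℝ)..1, aMu μ x * sin (π * x) ^ 3
      = (μ - 1) * (5 * sin (π / 5) * (3 - √5)) / (64 * π) := by
  set S : ℝ → ℝ := fun x => sin (5 * π * x) * sin (π * x) ^ 3
  have hS (a b : ℝ) : IntervalIntegrable S MeasureTheory.volume a b :=
    Continuous.intervalIntegrable (by fun_prop) a b
  have outer {a b : ℝ} (hab : Ioo a b ⊆ Ico 0 0.2 ∪ Ioc 0.8 1) (h : a ≤ b) :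
      EqOn (fun x => aMu μ x * sin (π * x) ^ 3) (fun x => μ * S x) (uIoo a b) := by
    intro x hx
    rw [uIoo_of_le h] at hx
    simp only [aMu_of_mem_outer (hab hx), S]
    ring
  have middle : EqOn (fun x => aMu μ x * sin (π * x) ^ 3) S (uIoo 0.2 0.8) := by
    rw [uIoo_of_le (by norm_num)]
    intro x hx
    simp only [aMu_of_mem_Icc (Ioo_subset_Icc_self hx), S]
  have e₁ := outer (a := 0) (b := 0.2) (fun x hx => Or.inl ⟨hx.1.le, hx.2⟩) (by norm_num)
  have e₃ := outer (a := 0.8) (b := 1) (fun x hx => Or.inr ⟨hx.1, hx.2.le⟩) (by norm_num)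
  have i₁ := ((hS 0 0.2).const_mul μ).congr_uIoo e₁.symm
  have i₂ := (hS 0.2 0.8).congr_uIoo middle.symm
  have i₃ := ((hS 0.8 1).const_mul μ).congr_uIoo e₃.symm
  rw [← integral_add_adjacent_intervals (i₁.trans i₂) i₃, ← integral_add_adjacent_intervals i₁ i₂,
    integral_congr_uIoo e₁, integral_congr_uIoo middle, integral_congr_uIoo e₃,
    integral_const_mul, integral_const_mul, integral_sin_five_mul_mul_sin_pow_three,
    integral_sin_five_mul_mul_sin_pow_three, integral_sin_five_mul_mul_sin_pow_three,
    show π * 0.2 = π / 5 by ring, show π * 0.8 = π - π / 5 by ring, show π * 1 = π - 0 by ring,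
    mul_zero, sinFiveMulSinCubeAntideriv_pi_sub, sinFiveMulSinCubeAntideriv_pi_sub,
    sinFiveMulSinCubeAntideriv_zero, sinFiveMulSinCubeAntideriv_pi_div_five]
  field_simp
  ring

theorem two_mul_sin_pi_div_five : 2 * sin (π / 5) = √((5 - √5) / 2) := by
  have hsin : 0 ≤ sin (π / 5) := sin_nonneg_of_nonneg_of_le_pi (by positivity) (by linarith [pi_pos])
  rw [← sqrt_sq (by positivity : 0 ≤ 2 * sin (π / 5)), mul_pow, sin_sq, cos_pi_div_five]
  congr 1
  ring_nf
  rw [sq_sqrt (by norm_num)]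
  ring

theorem stmt_17_general (μ : ℝ) :
    (-2 * ∫ x in (0:ℝ)..1, aMu μ x * Real.sin (Real.pi * x) ^ 3
      = -(Real.sqrt ((5 - Real.sqrt 5) / 2) * (5 - Real.sqrt 5) ^ 2 * (μ - 1))
          / (128 * Real.pi)) ∧
    (1 < μ →
      -2 * ∫ x in (0:ℝ)..1, aMu μ x * Real.sin (Real.pi * x) ^ 3 < 0) := by
  have hsqrt5 : √5 ^ 2 = 5 := sq_sqrt (by norm_num)
  have closed_form : -2 * ∫ x in (0:ℝ)..1, aMu μ x * sin (π * x) ^ 3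
      = -(√((5 - √5) / 2) * (5 - √5) ^ 2 * (μ - 1)) / (128 * π) := by
    rw [integral_aMu_mul_sin_pow_three, ← two_mul_sin_pi_div_five]
    field_simp
    linear_combination (64 * sin (π / 5) * (μ - 1)) * hsqrt5
  refine ⟨closed_form, fun hμ => ?_⟩
  have hsqrt5_lt : √5 < 5 := by nlinarith [sqrt_nonneg 5]
  rw [closed_form, neg_div, neg_lt_zero]
  have : 0 < √((5 - √5) / 2) := sqrt_pos.mpr (by linarith)
  have : 0 < μ - 1 := by linarith
  positivity

/-- For `μ ≥ 1`:
`-2 ∫₀¹ a_μ(x) sin³(πx) dx = -(√((5 − √5)/2)·(5 − √5)²·(μ − 1))/(128π)`, and this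
quantity is negative whenever `μ > 1`. -/
theorem stmt_17 (μ : ℝ) (hμ : 1 ≤ μ) :
    (-2 * ∫ x in (0:ℝ)..1, aMu μ x * Real.sin (Real.pi * x) ^ 3
      = -(Real.sqrt ((5 - Real.sqrt 5) / 2) * (5 - Real.sqrt 5) ^ 2 * (μ - 1))
          / (128 * Real.pi)) ∧
    (1 < μ →
      -2 * ∫ x in (0:ℝ)..1, aMu μ x * Real.sin (Real.pi * x) ^ 3 < 0) :=
  stmt_17_general μ
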